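/- Let τ_1 and τ_2 be adjacent Φ-topes with τ_1 ⊆ c(Φ), let H be their common wall, and let A be the set of i such that φ_i lies in the open side of H containing τ_1. Then B(Φ_flip^A, τ_2) equals the symmetric difference B(Φ,τ_1) △ B(Φ,τ_2); more precisely, K ∈ B(Φ,τ_1) and K ∉ B(Φ,τ_2) if and only if K ∈ B(Φ_flip^A,τ_2) and K ∩ A ≠ ∅, while K ∈ B(Φ,τ_2) and K ∉ B(Φ,τ_1) if and only if K ∈ B(Φ_flip^A,τ_2) and K ∩ A = ∅. Moreover the cone c(Φ_flip^A) is salient, and τ_2 is contained in at least one of the cones c(Φ) or c(Φ_flip^A). -/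

import Mathlib

/-!
For a basic set `K`, the coordinates in the basis `(φ_k)_{k ∈ K}` have constant signs on a tope,
because the coordinate hyperplanes are walls. Between the adjacent topes `τ₁, τ₂` the `j`-th
coordinate can change sign only if `K ∖ {j}` spans the common wall `H`; then all other `φ_k`
lie in `H`, so there is at most one such `j`, and the form `ξ` cutting out `H` (positive on
`τ₁`) is proportional to that coordinate. Expanding `ξ(μ₁) > 0` in the basis `K` fixes the
signs: `K ∈ B(Φ_flip^A, τ₂)` exactly when `K` is a basis for exactly one of `τ₁, τ₂`, and `K`
meets `A` exactly when that one is `τ₁`. The form `a - tξ`, `t ≫ 0`, is positive on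
`Φ_flip^A`, and a basis with `τ₁ ⊆ c(Φ_K)`, which exists by conic Carathéodory, shows
`τ₂ ⊆ c(Φ)` or `τ₂ ⊆ c(Φ_flip^A)`.
-/

open scoped Pointwise
open Classical MvPolynomial

noncomputable section

namespace AC

section Defs

variable {E : Type*} [AddCommGroup E] [Module ℝ E]
variable {ι : Type*} [Fintype ι] [DecidableEq ι]

/-- Characteristic function of a set, with values in `ℝ`. -/
def charFn {α : Type*} (s : Set α) (x : α) : ℝ := if x ∈ s then 1 else 0

/-- The cone of nonnegative linear combinations of `{Ψ i : i ∈ I}`. -/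
def coneOf (Ψ : ι → E) (I : Set ι) : Set E :=
  {v | ∃ c : ι → ℝ, (∀ i, 0 ≤ c i) ∧ (∀ i, i ∉ I → c i = 0) ∧ v = ∑ i, c i • Ψ i}

/-- The cone of nonnegative linear combinations of all the `Ψ i`. -/
def fullCone (Ψ : ι → E) : Set E := coneOf Ψ Set.univ

/-- A cone is salient if it contains no line, i.e. `v, -v ∈ C → v = 0`. -/
def Salient (C : Set E) : Prop := ∀ v ∈ C, -v ∈ C → v = 0

/-- A wall: a hyperplane spanned by `dim E - 1` linearly independent members of `Ψ`. -/
def IsWall (Ψ : ι → E) (H : Submodule ℝ E) : Prop :=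
  ∃ S : Finset ι, S.card + 1 = Module.finrank ℝ E ∧
    LinearIndependent ℝ (fun i : {x // x ∈ S} => Ψ i.1) ∧
    H = Submodule.span ℝ (Ψ '' ↑S)

/-- An element is regular when it lies on no wall. -/
def IsRegular (Ψ : ι → E) (μ : E) : Prop :=
  ∀ H : Submodule ℝ E, IsWall Ψ H → μ ∉ H

/-- `G(Ψ,τ)`: generating subsets whose cone contains `τ`. -/
def Gens (Ψ : ι → E) (τ : Set E) : Set (Finset ι) :=
  {I | Submodule.span ℝ (Ψ '' ↑I) = ⊤ ∧ τ ⊆ coneOf Ψ ↑I}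

/-- `I` is basic when `{Ψ i : i ∈ I}` is a basis of `E`. -/
def IsBasic (Ψ : ι → E) (I : Finset ι) : Prop :=
  LinearIndependent ℝ (fun i : {x // x ∈ I} => Ψ i.1) ∧
    Submodule.span ℝ (Ψ '' ↑I) = ⊤

/-- `B(Ψ,τ)`: basic subsets whose cone contains `τ`. -/
def Bases (Ψ : ι → E) (τ : Set E) : Set (Finset ι) :=
  {I | IsBasic Ψ I ∧ τ ⊆ coneOf Ψ ↑I}

/-- The combinatorial Brianchon-Gram polynomial `X(Ψ,τ)`; the variable `Sum.inl i`
plays the role of `p i` and `Sum.inr i` plays the role of `q i`. -/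
def BGpoly (Ψ : ι → E) (τ : Set E) : MvPolynomial (ι ⊕ ι) ℤ :=
  ∑ I : Finset ι,
    if I ∈ Gens Ψ τ then
      (-1 : MvPolynomial (ι ⊕ ι) ℤ) ^ (I.card - Module.finrank ℝ E) *
        ((∏ j ∈ Iᶜ, X (Sum.inl j)) * ∏ i ∈ I, (X (Sum.inl i) + X (Sum.inr i)))
    else 0

/-- The geometric Brianchon-Gram function `X_geom(Ψ,τ)` on `ℝ^ι`. -/
def XGeom (Ψ : ι → E) (τ : Set E) (x : ι → ℝ) : ℝ :=
  ∑ I : Finset ι,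
    if I ∈ Gens Ψ τ then
      (-1 : ℝ) ^ (I.card - Module.finrank ℝ E) *
        ∏ j ∈ Iᶜ, (if 0 ≤ x j then (1 : ℝ) else 0)
    else 0

/-- The affine subspace `V(Ψ,λ)`. -/
def affSlice (Ψ : ι → E) (lam : E) : Set (ι → ℝ) := {x | ∑ i, x i • Ψ i = lam}

/-- The partition polytope `p(Ψ,λ)`. -/
def partPoly (Ψ : ι → E) (lam : E) : Set (ι → ℝ) :=
  {x | (∀ i, 0 ≤ x i) ∧ ∑ i, x i • Ψ i = lam}

/-- The semi-closed quadrant `Q_neg^B`. -/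
def Qneg (B : Finset ι) : Set (ι → ℝ) :=
  {x | (∀ i ∈ B, x i < 0) ∧ ∀ i ∉ B, 0 ≤ x i}

/-- The flipped sequence `Ψ_flip^B`. -/
def flipSeq (Ψ : ι → E) (B : Finset ι) : ι → E := fun i => if i ∈ B then -Ψ i else Ψ i

/-- The zonotope `b(Ψ)`. -/
def zonotope (Ψ : ι → E) : Set E :=
  {v | ∃ t : ι → ℝ, (∀ i, 0 ≤ t i ∧ t i ≤ 1) ∧ v = ∑ i, t i • Ψ i}

/-- `x ∈ ℝ^ι` is a lattice point when all its coordinates are integers. -/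
def isLatticePt (x : ι → ℝ) : Prop := ∀ i, ∃ n : ℤ, x i = (n : ℝ)

/-- `v` lies in the open side of the hyperplane `H` containing `τ`. -/
def InOpenSideOf (H : Submodule ℝ E) (τ : Set E) (v : E) : Prop :=
  ∃ ξ : E →ₗ[ℝ] ℝ, (∀ h ∈ H, ξ h = 0) ∧ (∀ μ ∈ τ, 0 < ξ μ) ∧ 0 < ξ v

/-- The change of variables exchanging `p i` and `q i` for `i ∈ A`. -/
def flipVar (A : Finset ι) : ι ⊕ ι → ι ⊕ ι
  | Sum.inl i => if i ∈ A then Sum.inr i else Sum.inl i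
  | Sum.inr i => if i ∈ A then Sum.inl i else Sum.inr i

/-- The ring map `Flip_A`, exchanging `p i` and `q i` for `i ∈ A`. -/
def FlipPoly (A : Finset ι) (P : MvPolynomial (ι ⊕ ι) ℤ) : MvPolynomial (ι ⊕ ι) ℤ :=
  MvPolynomial.rename (flipVar A) P

/-- Value substituted for the variable `p i` in the substitution `Geom_A`. -/
def geomValA (A : Finset ι) (x : ι → ℝ) : ι → ℝ := fun i =>
  if i ∈ A then (if 0 < x i then 1 else 0) else (if 0 ≤ x i then 1 else 0)

/-- The substitution `Geom_A`: substitute `1 - p i` for `q i`, then `[x i ≥ 0]`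
for `p i` if `i ∉ A`, and `[x i > 0]` for `p i` if `i ∈ A`. -/
def GeomA (A : Finset ι) (P : MvPolynomial (ι ⊕ ι) ℤ) (x : ι → ℝ) : ℝ :=
  MvPolynomial.aeval (Sum.elim (geomValA A x) (fun i => 1 - geomValA A x i)) P

/-- The substitution `Geom`: `[x i ≥ 0]` for `p i`, `[x i < 0]` for `q i`. -/
def Geom (P : MvPolynomial (ι ⊕ ι) ℤ) (x : ι → ℝ) : ℝ := GeomA ∅ P x

/-- The semi-closed flipped partition polytope `p_flip(Ψ,A,λ)`. -/
def pflip (Ψ : ι → E) (A : Finset ι) (lam : E) : Set (ι → ℝ) :=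
  {x | (∑ i, x i • Ψ i = lam) ∧ (∀ i ∈ A, x i < 0) ∧ ∀ i ∉ A, 0 ≤ x i}

/-- The linear map `x ↦ ∑ i, x i • Ψ i`. -/
def Mmap (Ψ : ι → E) : (ι → ℝ) →ₗ[ℝ] E where
  toFun x := ∑ i, x i • Ψ i
  map_add' x y := by simp [add_smul, Finset.sum_add_distrib]
  map_smul' c x := by simp [smul_smul, Finset.smul_sum]

/-- A polynomial function on a finite-dimensional real vector space. -/
def IsPolynomialFun {W : Type*} [AddCommGroup W] [Module ℝ W] (f : W → ℝ) : Prop :=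
  ∃ (n : ℕ) (b : Module.Basis (Fin n) ℝ W) (p : MvPolynomial (Fin n) ℝ),
    ∀ v, f v = MvPolynomial.eval (fun i => b.repr v i) p

/-- `Λ` is a (full) lattice in `W`: the ℤ-span of some ℝ-basis. -/
def IsLattice {W : Type*} [AddCommGroup W] [Module ℝ W] (Λ : AddSubgroup W) : Prop :=
  ∃ b : Module.Basis (Fin (Module.finrank ℝ W)) ℝ W,
    ∀ v, v ∈ Λ ↔ ∀ i, ∃ n : ℤ, b.repr v i = (n : ℝ)

/-- Quasi-polynomial function on the lattice `Λ`: polynomial on each coset of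
a finite-index sublattice (here `D • Λ`). -/
def IsQuasiPolynomialOn {W : Type*} [AddCommGroup W] [Module ℝ W]
    (Λ : AddSubgroup W) (f : W → ℝ) : Prop :=
  ∃ D : ℕ, 0 < D ∧ ∀ lam₀ ∈ Λ, ∃ P : W → ℝ, IsPolynomialFun P ∧
    ∀ lam' ∈ Λ, f (lam₀ + D • lam') = P (lam₀ + D • lam')

end Defs

section Topes

variable {E : Type*} [AddCommGroup E] [Module ℝ E] [TopologicalSpace E]
variable {ι : Type*} [Fintype ι]

/-- A tope: a connected component of the set of regular elements. -/
def IsTope (Ψ : ι → E) (τ : Set E) : Prop :=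
  ∃ μ, IsRegular Ψ μ ∧ τ = connectedComponentIn {x | IsRegular Ψ x} μ

/-- Two topes are adjacent along the wall `H` when the intersection of their
closures is contained in `H` and spans `H`. -/
def Adjacent (Ψ : ι → E) (τ₁ τ₂ : Set E) (H : Submodule ℝ E) : Prop :=
  IsTope Ψ τ₁ ∧ IsTope Ψ τ₂ ∧ τ₁ ≠ τ₂ ∧ IsWall Ψ H ∧
    closure τ₁ ∩ closure τ₂ ⊆ (H : Set E) ∧
    Submodule.span ℝ (closure τ₁ ∩ closure τ₂) = H

end Topes

section SignVectors

variable {κ : Type*} [Fintype κ] {r₁ r₂ x : κ → ℝ}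

lemma sign_change_unique_of_sum_pos (hr₁ : ∀ j, r₁ j ≠ 0) (hr₂ : ∀ j, r₂ j ≠ 0)
    (hsum : 0 < ∑ j, r₁ j * x j) (hchange : ∀ j, r₁ j * r₂ j < 0 → ∀ i ≠ j, x i = 0)
    {j₀ : κ} (hj₀ : r₁ j₀ * r₂ j₀ < 0) :
    0 < r₁ j₀ * x j₀ ∧ ∀ i ≠ j₀, x i = 0 ∧ 0 < r₁ i * r₂ i := by
  have hx := hchange j₀ hj₀
  have hsum₀ : ∑ j, r₁ j * x j = r₁ j₀ * x j₀ :=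
    Finset.sum_eq_single j₀ (fun i _ hi => by rw [hx i hi, mul_zero]) (by simp)
  refine ⟨hsum₀ ▸ hsum, fun i hi => ⟨hx i hi, ?_⟩⟩
  rcases (mul_ne_zero (hr₁ i) (hr₂ i)).lt_or_gt with h | h
  · rw [hchange i h j₀ (Ne.symm hi), mul_zero] at hsum₀
    exact absurd (hsum₀ ▸ hsum) (lt_irrefl 0)
  · exact h

/-- The sign bookkeeping of the theorem: `r₁, r₂` are the coordinates of points of `τ₁, τ₂` in
a basis `K` and `x j = ξ (φ j)`; `0 < r₂ j ↔ x j ≤ 0` says `K ∈ B(Φ_flip^A, τ₂)`. -/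
theorem sign_patterns_of_single_change (hr₁ : ∀ j, r₁ j ≠ 0) (hr₂ : ∀ j, r₂ j ≠ 0)
    (hsum : 0 < ∑ j, r₁ j * x j) (hchange : ∀ j, r₁ j * r₂ j < 0 → ∀ i ≠ j, x i = 0) :
    ((∀ j, 0 < r₁ j) ∧ ¬ (∀ j, 0 < r₂ j) ↔ (∀ j, 0 < r₂ j ↔ x j ≤ 0) ∧ ∃ j, 0 < x j) ∧
    ((∀ j, 0 < r₂ j) ∧ ¬ (∀ j, 0 < r₁ j) ↔ (∀ j, 0 < r₂ j ↔ x j ≤ 0) ∧ ∀ j, x j ≤ 0) := by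
  by_cases hc : ∃ j₀, r₁ j₀ * r₂ j₀ < 0
  · obtain ⟨j₀, hj₀⟩ := hc
    obtain ⟨hx₀, hrest⟩ := sign_change_unique_of_sum_pos hr₁ hr₂ hsum hchange hj₀
    have forall_iff {p : κ → Prop} : (∀ j, p j) ↔ (∀ i ≠ j₀, p i) ∧ p j₀ :=
      ⟨fun h => ⟨fun i _ => h i, h j₀⟩,
        fun h i => if hi : i = j₀ then hi ▸ h.2 else h.1 i hi⟩
    have hr₂₀ : 0 < r₂ j₀ ↔ ¬ 0 < r₁ j₀ := by
      rw [pos_iff_neg_of_mul_neg hj₀, not_lt, (hr₂ j₀).symm.le_iff_lt]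
    have hx : 0 < x j₀ ↔ 0 < r₁ j₀ := (pos_iff_pos_of_mul_pos hx₀).symm
    have hP₁ : (∀ j, 0 < r₁ j) ↔ (∀ i ≠ j₀, 0 < r₂ i) ∧ 0 < r₁ j₀ := by
      rw [forall_iff]
      exact and_congr_left' (forall₂_congr fun i hi => pos_iff_pos_of_mul_pos (hrest i hi).2)
    have hP₂ : (∀ j, 0 < r₂ j) ↔ (∀ i ≠ j₀, 0 < r₂ i) ∧ ¬ 0 < r₁ j₀ := by
      rw [forall_iff, hr₂₀]
    have hflip : (∀ j, 0 < r₂ j ↔ x j ≤ 0) ↔ ∀ i ≠ j₀, 0 < r₂ i := by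
      rw [forall_iff, hr₂₀, ← not_lt, hx]
      simp +contextual [(hrest _ _).1]
    have hpos : (∃ j, 0 < x j) ↔ 0 < r₁ j₀ := by
      refine ⟨fun ⟨j, hj⟩ => ?_, fun h => ⟨j₀, hx.2 h⟩⟩
      by_cases hj₀' : j = j₀
      · exact hx.1 (hj₀' ▸ hj)
      · exact absurd hj (by rw [(hrest j hj₀').1]; exact lt_irrefl 0)
    have hnonpos : (∀ j, x j ≤ 0) ↔ ¬ 0 < r₁ j₀ := by
      simp only [← hpos, not_exists, not_lt]
    rw [hP₁, hP₂, hflip, hpos, hnonpos]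
    tauto
  · simp only [not_exists, not_lt] at hc
    have hsame : ∀ j, 0 < r₁ j ↔ 0 < r₂ j := fun j =>
      pos_iff_pos_of_mul_pos ((hc j).lt_of_ne' (mul_ne_zero (hr₁ j) (hr₂ j)))
    have hflip : ¬ ∀ j, (0 < r₂ j ↔ x j ≤ 0) := by
      intro hflip
      refine hsum.not_ge (Finset.sum_nonpos fun j _ => ?_)
      by_cases hxj : x j ≤ 0
      · exact mul_nonpos_of_nonneg_of_nonpos ((hsame j).2 ((hflip j).2 hxj)).le hxj
      · have : ¬ 0 < r₁ j := by rw [hsame, hflip]; exact hxj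
        nlinarith
    simp only [forall_congr' hsame]
    tauto

end SignVectors

section Cones

variable {E : Type*} [AddCommGroup E] [Module ℝ E] {ι : Type*}

lemma exists_sub_mul_nonneg_eq_zero {s : Finset ι} {c d : ι → ℝ} (hc : ∀ i ∈ s, 0 ≤ c i)
    (hd : ∃ i ∈ s, 0 < d i) :
    ∃ t : ℝ, (∀ i ∈ s, 0 ≤ c i - t * d i) ∧ ∃ i ∈ s, c i - t * d i = 0 := by
  obtain ⟨i₀, hi₀, hmin⟩ := (s.filter (0 < d ·)).exists_min_image (fun i => c i / d i)
    (by simpa [Finset.Nonempty] using hd)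
  rw [Finset.mem_filter] at hi₀
  have ht : 0 ≤ c i₀ / d i₀ := div_nonneg (hc i₀ hi₀.1) hi₀.2.le
  refine ⟨c i₀ / d i₀, fun i hi => ?_, i₀, hi₀.1, by rw [div_mul_cancel₀ _ hi₀.2.ne', sub_self]⟩
  rcases le_or_gt (d i) 0 with hdi | hdi
  · nlinarith [hc i hi]
  · have := hmin i (Finset.mem_filter.2 ⟨hi, hdi⟩)
    rw [le_div_iff₀ hdi] at this
    linarith

variable [Fintype ι] {Ψ : ι → E}

lemma coneOf_mono {I J : Set ι} (h : I ⊆ J) : coneOf Ψ I ⊆ coneOf Ψ J := by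
  rintro v ⟨c, hc, hcI, rfl⟩
  exact ⟨c, hc, fun i hi => hcI i fun hiI => hi (h hiI), rfl⟩

lemma coneOf_subset_fullCone (I : Set ι) : coneOf Ψ I ⊆ fullCone Ψ :=
  coneOf_mono (Set.subset_univ I)

lemma mem_coneOf_finset_iff {s : Finset ι} {μ : E} :
    μ ∈ coneOf Ψ ↑s ↔ ∃ c : ι → ℝ, (∀ i ∈ s, 0 ≤ c i) ∧ μ = ∑ i ∈ s, c i • Ψ i := by
  constructor
  · rintro ⟨c, hc, hcs, rfl⟩
    refine ⟨c, fun i _ => hc i, (Finset.sum_subset (Finset.subset_univ s) fun i _ hi => ?_).symm⟩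
    rw [hcs i hi, zero_smul]
  · rintro ⟨c, hc, rfl⟩
    refine ⟨fun i => if i ∈ s then c i else 0, fun i => ?_, fun i hi => if_neg hi, ?_⟩
    · dsimp only
      split_ifs with hi
      exacts [hc i hi, le_rfl]
    · simp [ite_smul, Finset.sum_ite_mem]

lemma salient_fullCone (a : E →ₗ[ℝ] ℝ) (ha : ∀ i, 0 < a (Ψ i)) : Salient (fullCone Ψ) := by
  have ha_sum (c : ι → ℝ) : a (∑ i, c i • Ψ i) = ∑ i, c i * a (Ψ i) := by simp
  rintro v ⟨c, hc, -, rfl⟩ ⟨d, hd, -, hvd⟩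
  have hcd := congrArg a hvd
  rw [map_neg, ha_sum, ha_sum] at hcd
  have hc₀ : 0 ≤ ∑ i, c i * a (Ψ i) := Finset.sum_nonneg fun i _ => mul_nonneg (hc i) (ha i).le
  have hd₀ : 0 ≤ ∑ i, d i * a (Ψ i) := Finset.sum_nonneg fun i _ => mul_nonneg (hd i) (ha i).le
  have hzero := (Finset.sum_eq_zero_iff_of_nonneg fun i _ => mul_nonneg (hc i) (ha i).le).1
    (by linarith)
  refine Finset.sum_eq_zero fun i hi => ?_
  rw [(mul_eq_zero.1 (hzero i hi)).resolve_right (ha i).ne', zero_smul]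

lemma exists_linearIndepOn_mem_coneOf {μ : E} (hμ : μ ∈ fullCone Ψ) :
    ∃ T : Finset ι, LinearIndepOn ℝ Ψ ↑T ∧ μ ∈ coneOf Ψ ↑T := by
  suffices ∀ s : Finset ι, μ ∈ coneOf Ψ ↑s → ∃ T : Finset ι, LinearIndepOn ℝ Ψ ↑T ∧ μ ∈ coneOf Ψ ↑T
    from this Finset.univ (by simpa [fullCone] using hμ)
  intro s
  induction s using Finset.strongInduction with
  | H s ih =>
    intro hs
    by_cases hli : LinearIndepOn ℝ Ψ ↑s
    · exact ⟨s, hli, hs⟩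
    obtain ⟨c, hc, rfl⟩ := mem_coneOf_finset_iff.1 hs
    obtain ⟨d, hd, hdpos⟩ : ∃ d : ι → ℝ, ∑ i ∈ s, d i • Ψ i = 0 ∧ ∃ i ∈ s, 0 < d i := by
      obtain ⟨d, hd, i, hi, hdi⟩ := not_linearIndepOn_finset_iff.1 hli
      rcases hdi.lt_or_gt with hdi | hdi
      · exact ⟨-d, by simp [hd], i, hi, by simpa using hdi⟩
      · exact ⟨d, hd, i, hi, hdi⟩
    -- move from `c` along the relation `d` until a first coefficient vanishes
    obtain ⟨t, hnonneg, i₀, hi₀, hzero⟩ := exists_sub_mul_nonneg_eq_zero hc hdpos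
    refine ih (s.erase i₀) (Finset.erase_ssubset hi₀) (mem_coneOf_finset_iff.2
      ⟨fun i => c i - t * d i, fun i hi => hnonneg i (Finset.mem_of_mem_erase hi), ?_⟩)
    rw [Finset.sum_erase _ (by simp only [hzero, zero_smul])]
    simp only [sub_smul, mul_smul, Finset.sum_sub_distrib, ← Finset.smul_sum, hd, smul_zero,
      sub_zero]

lemma exists_isBasic_mem_coneOf (hgen : Submodule.span ℝ (Set.range Ψ) = ⊤) {μ : E}
    (hμ : μ ∈ fullCone Ψ) : ∃ K : Finset ι, IsBasic Ψ K ∧ μ ∈ coneOf Ψ ↑K := by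
  obtain ⟨T, hT, hμT⟩ := exists_linearIndepOn_mem_coneOf hμ
  obtain ⟨b, -, hTb, hspan, hli⟩ := exists_linearIndepOn_extension hT (Set.subset_univ _)
  rw [← b.toFinite.coe_toFinset] at hTb hli hspan
  refine ⟨b.toFinite.toFinset, ⟨hli, ?_⟩, coneOf_mono hTb hμT⟩
  rw [eq_top_iff, ← hgen, Submodule.span_le, ← Set.image_univ]
  exact hspan

end Cones

section Flip

variable {E : Type*} [AddCommGroup E] {ι : Type*} [DecidableEq ι] {Ψ : ι → E} {A : Finset ι}

lemma flipSeq_flipSeq : flipSeq (flipSeq Ψ A) A = Ψ := by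
  funext i
  by_cases hi : i ∈ A <;> simp [flipSeq, hi]

variable [Module ℝ E]

lemma flipSeq_eq_units_smul :
    flipSeq Ψ A = (fun i => if i ∈ A then (-1 : ℝˣ) else 1) • Ψ := by
  funext i
  by_cases hi : i ∈ A <;> simp [flipSeq, hi, Units.smul_def]

lemma linearIndepOn_flipSeq {s : Set ι} (h : LinearIndepOn ℝ Ψ s) :
    LinearIndepOn ℝ (flipSeq Ψ A) s := by
  rw [flipSeq_eq_units_smul]
  exact h.units_smul _

lemma span_image_flipSeq (s : Set ι) :
    Submodule.span ℝ (flipSeq Ψ A '' s) = Submodule.span ℝ (Ψ '' s) := by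
  have hle {Ψ : ι → E} : Submodule.span ℝ (flipSeq Ψ A '' s) ≤ Submodule.span ℝ (Ψ '' s) := by
    rw [Submodule.span_le]
    rintro _ ⟨i, hi, rfl⟩
    have hmem : Ψ i ∈ Submodule.span ℝ (Ψ '' s) := Submodule.subset_span ⟨i, hi, rfl⟩
    by_cases hiA : i ∈ A
    · simpa [flipSeq, hiA] using Submodule.neg_mem _ hmem
    · simpa [flipSeq, hiA] using hmem
  refine le_antisymm hle ?_
  conv_lhs => rw [← flipSeq_flipSeq (Ψ := Ψ) (A := A)]
  exact hle

lemma isWall_flipSeq : IsWall (flipSeq Ψ A) = IsWall Ψ := by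
  funext H
  refine propext ⟨fun ⟨S, hS, hli, hH⟩ => ⟨S, hS, ?_, ?_⟩, fun ⟨S, hS, hli, hH⟩ =>
    ⟨S, hS, linearIndepOn_flipSeq hli, by rw [span_image_flipSeq, hH]⟩⟩
  · have := linearIndepOn_flipSeq (A := A) hli
    rwa [flipSeq_flipSeq] at this
  · rwa [span_image_flipSeq] at hH

lemma isRegular_flipSeq : IsRegular (flipSeq Ψ A) = IsRegular Ψ := by
  funext μ
  simp only [IsRegular, isWall_flipSeq]

lemma isTope_flipSeq [TopologicalSpace E] [Fintype ι] : IsTope (flipSeq Ψ A) = IsTope Ψ := by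
  funext τ
  simp only [IsTope, isRegular_flipSeq]

end Flip

lemma image_finset_eq_range {α β : Type*} (f : α → β) (s : Finset α) :
    f '' ↑s = Set.range fun i : s => f i :=
  Set.image_eq_range f ↑s

section Basic

variable {E : Type*} [AddCommGroup E] [Module ℝ E] {ι : Type*} {Ψ : ι → E} {K : Finset ι}

def IsBasic.basis (hK : IsBasic Ψ K) : Module.Basis K ℝ E :=
  .mk hK.1 (by rw [← image_finset_eq_range, hK.2])

@[simp]
lemma IsBasic.basis_apply (hK : IsBasic Ψ K) (j : K) : hK.basis j = Ψ j :=
  Module.Basis.mk_apply _ _ _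

lemma IsBasic.apply_eq_sum (hK : IsBasic Ψ K) (f : E →ₗ[ℝ] ℝ) (μ : E) :
    f μ = ∑ j, hK.basis.repr μ j * f (Ψ j) := by
  conv_lhs => rw [← hK.basis.sum_repr μ]
  simp

lemma IsBasic.finrank_eq_card (hK : IsBasic Ψ K) : Module.finrank ℝ E = K.card := by
  rw [Module.finrank_eq_card_basis hK.basis, Fintype.card_coe]

lemma IsWall.finrank_add_one {H : Submodule ℝ E} (hH : IsWall Ψ H) :
    Module.finrank ℝ H + 1 = Module.finrank ℝ E := by
  obtain ⟨S, hS, hli, rfl⟩ := hH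
  rw [image_finset_eq_range, finrank_span_eq_card hli, Fintype.card_coe, hS]

lemma IsBasic.mem_coneOf_iff [Fintype ι] (hK : IsBasic Ψ K) {μ : E} :
    μ ∈ coneOf Ψ ↑K ↔ ∀ j, 0 ≤ hK.basis.repr μ j := by
  rw [mem_coneOf_finset_iff]
  constructor
  · rintro ⟨c, hc, rfl⟩ j
    rw [← Finset.sum_coe_sort]
    simp_rw [← hK.basis_apply, Module.Basis.repr_sum_self]
    exact hc j j.2
  · intro h
    refine ⟨fun i => if hi : i ∈ K then hK.basis.repr μ ⟨i, hi⟩ else 0,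
      fun i hi => by simpa [hi] using h ⟨i, hi⟩, ?_⟩
    rw [← Finset.sum_coe_sort]
    conv_lhs => rw [← hK.basis.sum_repr μ]
    simp

variable [DecidableEq ι]

lemma IsBasic.flipSeq (hK : IsBasic Ψ K) (A : Finset ι) : IsBasic (flipSeq Ψ A) K :=
  ⟨linearIndepOn_flipSeq hK.1, by rw [span_image_flipSeq, hK.2]⟩

lemma isBasic_flipSeq_iff {A : Finset ι} : IsBasic (flipSeq Ψ A) K ↔ IsBasic Ψ K :=
  ⟨fun h => flipSeq_flipSeq (Ψ := Ψ) (A := A) ▸ h.flipSeq A, fun h => h.flipSeq A⟩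

lemma IsBasic.repr_flipSeq (hK : IsBasic Ψ K) (A : Finset ι) (μ : E) (j : K) :
    (hK.flipSeq A).basis.repr μ j =
      if ↑j ∈ A then -hK.basis.repr μ j else hK.basis.repr μ j := by
  have : (hK.flipSeq A).basis = hK.basis.unitsSMul fun j => if ↑j ∈ A then -1 else 1 :=
    Module.Basis.eq_of_apply_eq fun j => by
      by_cases hj : ↑j ∈ A <;>
        simp [_root_.AC.flipSeq, hj, Module.Basis.unitsSMul_apply, Units.smul_def]
  rw [this, Module.Basis.repr_unitsSMul]
  by_cases hj : ↑j ∈ A <;> simp [hj, Units.smul_def]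

lemma IsBasic.mem_span_erase_of_repr_eq_zero (hK : IsBasic Ψ K) {μ : E} {j : K}
    (h : hK.basis.repr μ j = 0) : μ ∈ Submodule.span ℝ (Ψ '' ↑(K.erase j)) := by
  have hμ : μ ∈ Submodule.span ℝ (hK.basis '' {j}ᶜ) :=
    hK.basis.mem_span_image.2 fun i hi => by
      rintro rfl
      exact (Finsupp.mem_support_iff.1 hi) h
  refine Submodule.span_mono ?_ hμ
  rintro _ ⟨i, hi, rfl⟩
  exact ⟨i, Finset.mem_erase.2 ⟨fun h => hi (Subtype.ext h), i.2⟩, (hK.basis_apply i).symm⟩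

lemma IsBasic.isWall_span_erase (hK : IsBasic Ψ K) (j : K) :
    IsWall Ψ (Submodule.span ℝ (Ψ '' ↑(K.erase j))) := by
  refine ⟨K.erase j, ?_,
    LinearIndepOn.mono hK.1 (Finset.coe_subset.2 (Finset.erase_subset (j : ι) K)), rfl⟩
  rw [Finset.card_erase_add_one j.2, hK.finrank_eq_card]

lemma IsBasic.repr_ne_zero (hK : IsBasic Ψ K) {μ : E} (hμ : IsRegular Ψ μ) (j : K) :
    hK.basis.repr μ j ≠ 0 := fun h =>
  hμ _ (hK.isWall_span_erase j) (hK.mem_span_erase_of_repr_eq_zero h)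

end Basic

section Functionals

variable {E : Type*} [AddCommGroup E] [Module ℝ E]

lemma inOpenSideOf_iff {H : Submodule ℝ E} {τ : Set E} {ξ : E →ₗ[ℝ] ℝ}
    (hker : LinearMap.ker ξ = H) (hτ : τ.Nonempty) (hpos : ∀ μ ∈ τ, 0 < ξ μ) {v : E} :
    InOpenSideOf H τ v ↔ 0 < ξ v := by
  refine ⟨fun ⟨ξ', hξ'H, hξ'τ, hξ'v⟩ => ?_,
    fun hv => ⟨ξ, fun h hh => by rwa [← hker] at hh, hpos, hv⟩⟩
  obtain ⟨μ, hμ⟩ := hτ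
  -- `ξ'` vanishes on `ker ξ`, hence is proportional to `ξ`
  have hprop : ξ' v * ξ μ = ξ v * ξ' μ := by
    have := hξ'H (ξ μ • v - ξ v • μ) (hker ▸ by simp [mul_comm])
    simp only [map_sub, map_smul, smul_eq_mul] at this
    linarith
  exact (pos_iff_pos_of_mul_pos (hprop ▸ mul_pos hξ'v (hpos μ hμ))).2 (hξ'τ μ hμ)

lemma salient_fullCone_flipSeq {ι : Type*} [Fintype ι] [DecidableEq ι] {Ψ : ι → E}
    {A : Finset ι} (a ξ : E →ₗ[ℝ] ℝ) (ha : ∀ i, 0 < a (Ψ i)) (hA : ∀ i, i ∈ A ↔ 0 < ξ (Ψ i)) :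
    Salient (fullCone (flipSeq Ψ A)) := by
  obtain ⟨t, ht₀, ht⟩ : ∃ t : ℝ, 0 ≤ t ∧ ∀ i ∈ A, a (Ψ i) < t * ξ (Ψ i) :=
    ((Filter.eventually_ge_atTop 0).and ((Filter.eventually_all_finset A).2 fun i hi =>
      (Filter.tendsto_id.atTop_mul_const ((hA i).1 hi)).eventually_gt_atTop _)).exists
  refine salient_fullCone (a - t • ξ) fun i => ?_
  by_cases hi : i ∈ A
  · simpa [flipSeq, hi] using ht i hi
  · have : ξ (Ψ i) ≤ 0 := not_lt.1 fun h => hi ((hA i).2 h)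
    simp only [flipSeq, hi, if_false, LinearMap.sub_apply, LinearMap.smul_apply, smul_eq_mul]
    nlinarith [ha i]

end Functionals

lemma _root_.IsPreconnected.mul_pos_of_ne_zero {X : Type*} [TopologicalSpace X] {s : Set X}
    (hs : IsPreconnected s) {f : X → ℝ} (hf : ContinuousOn f s) (h₀ : ∀ x ∈ s, f x ≠ 0)
    {x y : X} (hx : x ∈ s) (hy : y ∈ s) : 0 < f x * f y := by
  by_contra h
  obtain ⟨z, hz, hfz⟩ : (0 : ℝ) ∈ f '' s := by
    rcases mul_nonpos_iff.1 (not_lt.1 h) with ⟨hfx, hfy⟩ | ⟨hfx, hfy⟩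
    exacts [hs.intermediate_value hy hx hf ⟨hfy, hfx⟩, hs.intermediate_value hx hy hf ⟨hfx, hfy⟩]
  exact h₀ z hz hfz

section Topes

variable {E : Type*} {ι : Type*} {Ψ : ι → E} {τ τ₁ τ₂ : Set E} {μ : E}

section Topological

variable [AddCommGroup E] [Module ℝ E] [TopologicalSpace E]

lemma IsTope.isRegular (hτ : IsTope Ψ τ) (hμ : μ ∈ τ) : IsRegular Ψ μ := by
  obtain ⟨μ₀, -, rfl⟩ := hτ
  exact connectedComponentIn_subset _ _ hμ

lemma IsTope.nonempty (hτ : IsTope Ψ τ) : τ.Nonempty := by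
  obtain ⟨μ₀, hμ₀, rfl⟩ := hτ
  exact ⟨μ₀, mem_connectedComponentIn hμ₀⟩

lemma IsTope.isPreconnected (hτ : IsTope Ψ τ) : IsPreconnected τ := by
  obtain ⟨μ₀, -, rfl⟩ := hτ
  exact isPreconnected_connectedComponentIn

end Topological

variable [NormedAddCommGroup E] [NormedSpace ℝ E] [FiniteDimensional ℝ E] {K : Finset ι}
  {H : Submodule ℝ E}

lemma IsTope.mul_pos (hτ : IsTope Ψ τ) (f : E →ₗ[ℝ] ℝ) (hf : ∀ μ, IsRegular Ψ μ → f μ ≠ 0)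
    {x y : E} (hx : x ∈ τ) (hy : y ∈ τ) : 0 < f x * f y :=
  hτ.isPreconnected.mul_pos_of_ne_zero f.continuous_of_finiteDimensional.continuousOn
    (fun μ hμ => hf μ (hτ.isRegular hμ)) hx hy

lemma IsTope.repr_mul_pos (hτ : IsTope Ψ τ) (hK : IsBasic Ψ K) {x y : E} (hx : x ∈ τ)
    (hy : y ∈ τ) (j : K) : 0 < hK.basis.repr x j * hK.basis.repr y j := by
  simpa using hτ.mul_pos (hK.basis.coord j) (fun μ hμ => by simpa using hK.repr_ne_zero hμ j) hx hy

lemma IsTope.subset_coneOf_iff [Fintype ι] (hτ : IsTope Ψ τ) (hK : IsBasic Ψ K) (hμ : μ ∈ τ) :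
    τ ⊆ coneOf Ψ ↑K ↔ μ ∈ coneOf Ψ ↑K := by
  refine ⟨fun h => h hμ, fun h ν hν => hK.mem_coneOf_iff.2 fun j => ?_⟩
  have hμj := (hK.mem_coneOf_iff.1 h j).lt_of_ne' (hK.repr_ne_zero (hτ.isRegular hμ) j)
  exact ((pos_iff_pos_of_mul_pos (hτ.repr_mul_pos hK hμ hν j)).1 hμj).le

lemma IsTope.mem_bases_iff [Fintype ι] (hτ : IsTope Ψ τ) (hK : IsBasic Ψ K) (hμ : μ ∈ τ) :
    K ∈ Bases Ψ τ ↔ ∀ j, 0 < hK.basis.repr μ j := by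
  rw [Bases, Set.mem_ofPred_eq, hτ.subset_coneOf_iff hK hμ, hK.mem_coneOf_iff, and_iff_right hK]
  exact forall_congr' fun j => (hK.repr_ne_zero (hτ.isRegular hμ) j).symm.le_iff_lt

lemma IsTope.mem_bases_flipSeq_iff [Fintype ι] [DecidableEq ι] {A : Finset ι} (hτ : IsTope Ψ τ)
    (hK : IsBasic Ψ K) (hμ : μ ∈ τ) :
    K ∈ Bases (flipSeq Ψ A) τ ↔ ∀ j : K, (0 < hK.basis.repr μ j ↔ ↑j ∉ A) := by
  have hτ' : IsTope (flipSeq Ψ A) τ := by rwa [isTope_flipSeq]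
  rw [hτ'.mem_bases_iff (hK.flipSeq A) hμ]
  refine forall_congr' fun j => ?_
  have := hK.repr_ne_zero (hτ.isRegular hμ) j
  by_cases hj : ↑j ∈ A <;> simp [hK.repr_flipSeq, hj, this.le_iff_lt]

lemma IsTope.exists_ker_eq_of_isWall (hτ : IsTope Ψ τ) (hH : IsWall Ψ H) :
    ∃ ξ : E →ₗ[ℝ] ℝ, LinearMap.ker ξ = H ∧ ∀ μ ∈ τ, 0 < ξ μ := by
  have hfinrank := hH.finrank_add_one
  obtain ⟨f, hf₀, hHf⟩ := H.exists_le_ker_of_lt_top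
    (Submodule.lt_top_of_finrank_lt_finrank (by omega))
  have hker : H = LinearMap.ker f := Submodule.eq_of_le_of_finrank_le hHf <| by
    have := Submodule.finrank_lt (mt LinearMap.ker_eq_top.1 hf₀)
    omega
  have hf : ∀ μ, IsRegular Ψ μ → f μ ≠ 0 := fun μ hμ h => hμ H hH (hker ▸ h)
  obtain ⟨μ₀, hμ₀⟩ := hτ.nonempty
  exact ⟨f μ₀ • f, by rw [LinearMap.ker_smul _ _ (hf _ (hτ.isRegular hμ₀)), hker],
    fun μ hμ => hτ.mul_pos f hf hμ₀ hμ⟩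

lemma Adjacent.le_ker (hadj : Adjacent Ψ τ₁ τ₂ H) (f : E →ₗ[ℝ] ℝ) (h₁ : ∀ μ ∈ τ₁, 0 ≤ f μ)
    (h₂ : ∀ μ ∈ τ₂, f μ ≤ 0) : H ≤ LinearMap.ker f := by
  have hf := f.continuous_of_finiteDimensional
  rw [← hadj.2.2.2.2.2, Submodule.span_le]
  rintro x ⟨hx₁, hx₂⟩
  exact le_antisymm (closure_minimal h₂ (isClosed_le hf continuous_const) hx₂)
    (closure_minimal h₁ (isClosed_le continuous_const hf) hx₁)

lemma Adjacent.span_erase_eq [DecidableEq ι] (hadj : Adjacent Ψ τ₁ τ₂ H) (hK : IsBasic Ψ K)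
    {μ₁ μ₂ : E} (hμ₁ : μ₁ ∈ τ₁) (hμ₂ : μ₂ ∈ τ₂) {j : K}
    (hj : hK.basis.repr μ₁ j * hK.basis.repr μ₂ j < 0) :
    Submodule.span ℝ (Ψ '' ↑(K.erase j)) = H := by
  set r := hK.basis.repr μ₁ j
  have hle : H ≤ LinearMap.ker (r • hK.basis.coord j) := by
    refine hadj.le_ker _ (fun μ hμ => ?_) (fun μ hμ => ?_) <;>
      simp only [LinearMap.smul_apply, Module.Basis.coord_apply, smul_eq_mul]
    · exact (hadj.1.repr_mul_pos hK hμ₁ hμ j).le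
    · nlinarith [hadj.2.1.repr_mul_pos hK hμ hμ₂ j, mul_self_nonneg (hK.basis.repr μ j)]
  rw [LinearMap.ker_smul _ _ (hK.repr_ne_zero (hadj.1.isRegular hμ₁) j)] at hle
  have hwall := (hK.isWall_span_erase j).finrank_add_one
  have hH := hadj.2.2.2.1.finrank_add_one
  exact (Submodule.eq_of_le_of_finrank_eq
    (hle.trans fun μ hμ => hK.mem_span_erase_of_repr_eq_zero hμ) (by omega)).symm

theorem Adjacent.bases_flipSeq [Fintype ι] [DecidableEq ι] (hadj : Adjacent Ψ τ₁ τ₂ H)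
    {ξ : E →ₗ[ℝ] ℝ} (hξH : H ≤ LinearMap.ker ξ) (hξ : ∀ μ ∈ τ₁, 0 < ξ μ) {A : Finset ι}
    (hA : ∀ i, i ∈ A ↔ 0 < ξ (Ψ i)) (K : Finset ι) :
    ((K ∈ Bases Ψ τ₁ ∧ K ∉ Bases Ψ τ₂) ↔ (K ∈ Bases (flipSeq Ψ A) τ₂ ∧ (K ∩ A).Nonempty)) ∧
    ((K ∈ Bases Ψ τ₂ ∧ K ∉ Bases Ψ τ₁) ↔ (K ∈ Bases (flipSeq Ψ A) τ₂ ∧ K ∩ A = ∅)) := by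
  by_cases hK : IsBasic Ψ K
  swap
  · simp [Bases, hK, isBasic_flipSeq_iff]
  obtain ⟨μ₁, hμ₁⟩ := hadj.1.nonempty
  obtain ⟨μ₂, hμ₂⟩ := hadj.2.1.nonempty
  have hsigns := sign_patterns_of_single_change (x := fun j : K => ξ (Ψ j))
    (hK.repr_ne_zero (hadj.1.isRegular hμ₁)) (hK.repr_ne_zero (hadj.2.1.isRegular hμ₂))
    (hK.apply_eq_sum ξ μ₁ ▸ hξ μ₁ hμ₁) fun j hj i hij => hξH <| by
      rw [← hadj.span_erase_eq hK hμ₁ hμ₂ hj]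
      exact Submodule.subset_span
        ⟨i, Finset.mem_erase.2 ⟨fun h => hij (Subtype.ext h), i.2⟩, rfl⟩
  rw [hadj.1.mem_bases_iff hK hμ₁, hadj.2.1.mem_bases_iff hK hμ₂,
    hadj.2.1.mem_bases_flipSeq_iff hK hμ₂]
  simpa [Finset.Nonempty, Finset.eq_empty_iff_forall_notMem, hA] using hsigns

end Topes

theorem bases_of_flipped_system_general
    {F : Type*} [NormedAddCommGroup F] [NormedSpace ℝ F] [FiniteDimensional ℝ F]
    {N : ℕ} (Φ : Fin N → F)
    (hgen : Submodule.span ℝ (Set.range Φ) = ⊤)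
    (hsal : ∃ a : F →ₗ[ℝ] ℝ, ∀ i, 0 < a (Φ i))
    (τ₁ τ₂ : Set F) (H : Submodule ℝ F) (hadj : Adjacent Φ τ₁ τ₂ H)
    (hτ₁c : τ₁ ⊆ fullCone Φ)
    (A : Finset (Fin N)) (hA : ∀ i, i ∈ A ↔ InOpenSideOf H τ₁ (Φ i)) :
    (∀ K : Finset (Fin N),
      (K ∈ Bases Φ τ₁ ∧ K ∉ Bases Φ τ₂) ↔
        (K ∈ Bases (flipSeq Φ A) τ₂ ∧ (K ∩ A).Nonempty)) ∧
    (∀ K : Finset (Fin N),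
      (K ∈ Bases Φ τ₂ ∧ K ∉ Bases Φ τ₁) ↔
        (K ∈ Bases (flipSeq Φ A) τ₂ ∧ K ∩ A = ∅)) ∧
    Salient (fullCone (flipSeq Φ A)) ∧
    (τ₂ ⊆ fullCone Φ ∨ τ₂ ⊆ fullCone (flipSeq Φ A)) := by
  obtain ⟨ξ, hξH, hξ⟩ := hadj.1.exists_ker_eq_of_isWall hadj.2.2.2.1
  have hAξ : ∀ i, i ∈ A ↔ 0 < ξ (Φ i) := fun i =>
    (hA i).trans (inOpenSideOf_iff hξH hadj.1.nonempty hξ)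
  have hbases := hadj.bases_flipSeq hξH.ge hξ hAξ
  obtain ⟨a, ha⟩ := hsal
  refine ⟨fun K => (hbases K).1, fun K => (hbases K).2, salient_fullCone_flipSeq a ξ ha hAξ, ?_⟩
  obtain ⟨μ₁, hμ₁⟩ := hadj.1.nonempty
  obtain ⟨K, hK, hμ₁K⟩ := exists_isBasic_mem_coneOf hgen (hτ₁c hμ₁)
  have hK₁ : K ∈ Bases Φ τ₁ := ⟨hK, (hadj.1.subset_coneOf_iff hK hμ₁).2 hμ₁K⟩
  by_cases hK₂ : K ∈ Bases Φ τ₂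
  · exact Or.inl (hK₂.2.trans (coneOf_subset_fullCone _))
  · exact Or.inr (((hbases K).1.1 ⟨hK₁, hK₂⟩).1.2.trans (coneOf_subset_fullCone _))

/-- `B(Φ_flip^A, τ₂)` is the symmetric difference `B(Φ,τ₁) △ B(Φ,τ₂)`, with
the two halves characterized by whether `K` meets `A`; moreover `c(Φ_flip^A)`
is salient and `τ₂` is contained in `c(Φ)` or in `c(Φ_flip^A)`. -/
theorem bases_of_flipped_system
    {F : Type*} [NormedAddCommGroup F] [NormedSpace ℝ F] [FiniteDimensional ℝ F]
    {N : ℕ} (Φ : Fin N → F)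
    (hne : ∀ i, Φ i ≠ 0)
    (hgen : Submodule.span ℝ (Set.range Φ) = ⊤)
    (hsal : ∃ a : F →ₗ[ℝ] ℝ, ∀ i, 0 < a (Φ i))
    (τ₁ τ₂ : Set F) (H : Submodule ℝ F) (hadj : Adjacent Φ τ₁ τ₂ H)
    (hτ₁c : τ₁ ⊆ fullCone Φ)
    (A : Finset (Fin N)) (hA : ∀ i, i ∈ A ↔ InOpenSideOf H τ₁ (Φ i)) :
    (∀ K : Finset (Fin N),
      (K ∈ Bases Φ τ₁ ∧ K ∉ Bases Φ τ₂) ↔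
        (K ∈ Bases (flipSeq Φ A) τ₂ ∧ (K ∩ A).Nonempty)) ∧
    (∀ K : Finset (Fin N),
      (K ∈ Bases Φ τ₂ ∧ K ∉ Bases Φ τ₁) ↔
        (K ∈ Bases (flipSeq Φ A) τ₂ ∧ K ∩ A = ∅)) ∧
    Salient (fullCone (flipSeq Φ A)) ∧
    (τ₂ ⊆ fullCone Φ ∨ τ₂ ⊆ fullCone (flipSeq Φ A)) :=
  bases_of_flipped_system_general Φ hgen hsal τ₁ τ₂ H hadj hτ₁c A hA

end AC
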